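/- arXiv:2001.07939 — 5 statements merged into one kernel-verified Lean document; each statement's English description precedes it below -/
import Mathlib

section
/- For any n ≥ 1 and 1 ≤ k ≤ n, the ratio q_n(a_1,...,a_n) / q_{n-1}(a_1,...,a_{k-1},a_{k+1},...,a_n) lies between (a_k + 1)/2 and a_k + 1, where q_m denotes the denominator of the m-th convergent of the continued fraction with the given partial quotients. -/
private def cont (c : ℕ → ℕ) : ℕ → ℕ
  | 0 => 0
  | 1 => 1
  | (m+2) => c (m+1) * cont c (m+1) + cont c m

/-- For any n ≥ 1 and 1 ≤ k ≤ n, the ratio of the continued fraction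
denominator q_n(a_1,...,a_n) (here `qa (n+1)`) to the denominator
q_{n-1}(a_1,...,a_{k-1},a_{k+1},...,a_n) (here `qb n`) lies between
(a_k+1)/2 and a_k+1. -/
theorem cf_denominator_delete_ratio (a b : ℕ → ℕ) (ha : ∀ i, 1 ≤ a i)
    (n k : ℕ) (hk1 : 1 ≤ k) (hkn : k ≤ n) (hn : 1 ≤ n)
    (hb : ∀ i, b i = if i < k then a i else a (i + 1))
    (qa qb : ℕ → ℕ)
    (hqa0 : qa 0 = 0) (hqa1 : qa 1 = 1)
    (hqarec : ∀ m, qa (m + 2) = a (m + 1) * qa (m + 1) + qa m)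
    (hqb0 : qb 0 = 0) (hqb1 : qb 1 = 1)
    (hqbrec : ∀ m, qb (m + 2) = b (m + 1) * qb (m + 1) + qb m) :
    ((a k : ℝ) + 1) / 2 ≤ (qa (n + 1) : ℝ) / (qb n : ℝ) ∧
      (qa (n + 1) : ℝ) / (qb n : ℝ) ≤ (a k : ℝ) + 1 := by
  -- monotonicity of qa
  have hmono : ∀ m, qa m ≤ qa (m + 1) := by
    intro m
    match m with
    | 0 => simp [hqa0, hqa1]
    | (m+1) =>
      rw [hqarec m]
      have := ha (m+1)
      nlinarith [Nat.zero_le (qa m), Nat.zero_le (qa (m+1))]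
  have hqa_pos : ∀ m, 1 ≤ m → 1 ≤ qa m := by
    intro m hm
    induction m with
    | zero => omega
    | succ m ih =>
      rcases Nat.eq_or_lt_of_le hm with h | h
      · simp [← h, hqa1]
      · exact le_trans (ih (by omega)) (hmono m)
  -- qb agrees with qa up to index k
  have hqab : ∀ m, (m ≤ k → qb m = qa m) ∧ (m + 1 ≤ k → qb (m+1) = qa (m+1)) := by
    intro m
    induction m with
    | zero => exact ⟨fun _ => by rw [hqb0, hqa0], fun _ => by rw [hqb1, hqa1]⟩
    | succ m ih =>
      refine ⟨ih.2, fun hm => ?_⟩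
      rw [hqbrec m, hqarec m, hb (m+1), if_pos (by omega), ih.1 (by omega),
        ih.2 (by omega)]
  obtain ⟨j, rfl⟩ : ∃ j, k = j + 1 := ⟨k - 1, by omega⟩
  set k := j + 1 with hk
  -- continuants of the tail
  set S : ℕ → ℕ := fun m => cont (fun i => a (k + i)) (m + 1) with hS
  set T : ℕ → ℕ := fun m => cont (fun i => a (k + 1 + i)) m with hT
  have hSrec : ∀ m, S (m + 2) = a (k + m + 2) * S (m + 1) + S m := by
    intro m
    show a (k + (m + 1 + 1)) * cont (fun i => a (k + i)) (m + 1 + 1)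
        + cont (fun i => a (k + i)) (m + 1)
      = a (k + m + 2) * S (m + 1) + S m
    rw [show k + (m + 1 + 1) = k + m + 2 from by omega]
  have hTrec : ∀ m, T (m + 2) = a (k + m + 2) * T (m + 1) + T m := by
    intro m
    show a (k + 1 + (m + 1)) * cont (fun i => a (k + 1 + i)) (m + 1)
        + cont (fun i => a (k + 1 + i)) m
      = a (k + m + 2) * T (m + 1) + T m
    rw [show k + 1 + (m + 1) = k + m + 2 from by omega]
  have hS0 : S 0 = 1 := rfl
  have hT0 : T 0 = 0 := rfl
  have hS1 : S 1 = a (k + 1) := by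
    show cont _ 2 = _
    rw [cont]
    simp [cont]
  have hT1 : T 1 = 1 := rfl
  -- the key invariant
  have key : ∀ m,
      (qb (k + m) = qa k * S m + qa j * T m ∧
        qa (k + m + 1) = qa (k + 1) * S m + qa k * T m ∧
        T m ≤ S m ∧ 1 ≤ S m) ∧
      (qb (k + (m+1)) = qa k * S (m+1) + qa j * T (m+1) ∧
        qa (k + (m+1) + 1) = qa (k + 1) * S (m+1) + qa k * T (m+1) ∧
        T (m+1) ≤ S (m+1) ∧ 1 ≤ S (m+1)) := by
    intro m
    induction m with
    | zero =>
      constructor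
      · refine ⟨?_, ?_, ?_, ?_⟩
        · rw [hS0, hT0, (hqab k).1 le_rfl]; ring
        · rw [hS0, hT0]; ring
        · rw [hS0, hT0]; omega
        · rw [hS0]
      · have hqbk1 : qb (k + 1) = b k * qb k + qb j := hqbrec j
        refine ⟨?_, ?_, ?_, ?_⟩
        · rw [hqbk1, hS1, hT1, hb k, if_neg (by omega), (hqab k).1 le_rfl,
            (hqab j).1 (by omega)]
          ring
        · have : qa (k + 2) = a (k+1) * qa (k+1) + qa k := hqarec k
          rw [show k + 1 + 1 = k + 2 from rfl, this, hS1, hT1]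
          ring
        · rw [hS1, hT1]; exact ha (k+1)
        · rw [hS1]; exact ha (k+1)
    | succ m ih =>
      refine ⟨ih.2, ?_, ?_, ?_, ?_⟩
      · have hqbrec' : qb (k + (m + 2)) = a (k + m + 2) * qb (k + (m+1)) + qb (k + m) := by
          have := hqbrec (k + m)
          rw [hb (k + m + 1), if_neg (by omega)] at this
          rw [show k + (m+2) = k + m + 2 from by ring, this]
          ring_nf
        rw [hqbrec', hSrec m, hTrec m, ih.1.1, ih.2.1]
        ring_nf
      · have hqarec' : qa (k + (m + 2) + 1) = a (k + m + 2) * qa (k + (m+1) + 1) + qa (k + m + 1) := by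
          have := hqarec (k + m + 1)
          rw [show k + (m+2) + 1 = k + m + 1 + 2 from by ring, this]
          ring_nf
        rw [hqarec', hSrec m, hTrec m, ih.1.2.1, ih.2.2.1]
        ring_nf
      · rw [hSrec m, hTrec m]
        have h1 := ih.1.2.2.1
        have h2 := ih.2.2.2.1
        gcongr
      · rw [hSrec m]
        have h2 := ih.2.2.2.2
        have h3 : 1 * 1 ≤ a (k + m + 2) * S (m + 1) :=
          Nat.mul_le_mul (ha (k + m + 2)) h2
        have h4 := Nat.zero_le (S m)
        linarith
  obtain ⟨m0, rfl⟩ : ∃ m0, n = k + m0 := ⟨n - k, by omega⟩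
  obtain ⟨heqb, heqa, hTS, hS1'⟩ := (key m0).1
  clear_value S T
  clear key hSrec hTrec hS0 hS1 hT0 hT1
  have hqak1 : qa (k + 1) = a k * qa k + qa j := hqarec j
  set A := qa k with hA
  set A' := qa j with hA'
  set B := S m0 with hB
  set C := T m0 with hC
  have hA'A : A' ≤ A := hmono j
  have hA1 : 1 ≤ A := hqa_pos k (by omega)
  clear_value A A' B C
  have hak : 1 ≤ a k := ha k
  have heqa' : qa (k + m0 + 1) = (a k * A + A') * B + A * C := by
    rw [heqa, hqak1]
  have key1 : A' * C ≤ A * B := Nat.mul_le_mul hA'A hTS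
  have key3 : A' * C ≤ A' * B := Nat.mul_le_mul_left A' hTS
  have key5 : a k * (A' * C) + A * B ≤ a k * (A * B) + A' * C := by
    obtain ⟨t, ht⟩ : ∃ t, a k = t + 1 := ⟨a k - 1, by omega⟩
    have h6 : t * (A' * C) ≤ t * (A * B) := Nat.mul_le_mul_left t key1
    rw [ht]
    ring_nf
    ring_nf at h6
    linarith
  have key6 : A' * B + A * C ≤ A * B + A' * C := by
    obtain ⟨u, hu⟩ : ∃ u, A = A' + u := ⟨A - A', by omega⟩
    obtain ⟨v, hv⟩ : ∃ v, B = C + v := ⟨B - C, by omega⟩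
    rw [hu, hv]
    ring_nf
    have := Nat.zero_le (u * v)
    linarith
  have hub : qa (k + m0 + 1) ≤ (a k + 1) * qb (k + m0) := by
    rw [heqa', heqb]
    ring_nf
    ring_nf at key5 key6 ⊢
    have := Nat.zero_le (a k * (A' * C))
    ring_nf at this
    linarith
  have hlb : (a k + 1) * qb (k + m0) ≤ 2 * qa (k + m0 + 1) := by
    rw [heqa', heqb]
    ring_nf
    ring_nf at key5 key3 ⊢
    have := Nat.zero_le (A * C)
    ring_nf at this
    linarith
  have hqbpos : 0 < qb (k + m0) := by
    rw [heqb]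
    have h : 1 * 1 ≤ A * B := Nat.mul_le_mul hA1 hS1'
    have := Nat.zero_le (A' * C)
    linarith
  have hy : (0:ℝ) < (qb (k + m0) : ℝ) := by exact_mod_cast hqbpos
  have hub' : (qa (k + m0 + 1) : ℝ) ≤ ((a k : ℝ) + 1) * (qb (k + m0) : ℝ) := by
    exact_mod_cast hub
  have hlb' : ((a k : ℝ) + 1) * (qb (k + m0) : ℝ) ≤ 2 * (qa (k + m0 + 1) : ℝ) := by
    exact_mod_cast hlb
  constructor
  · rw [div_le_div_iff₀ (by norm_num) hy]
    linarith
  · rw [div_le_iff₀ hy]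
    linarith
end

section
/- Let 1 < a < b < ∞ and define ψ(n) = a^n if n is even and ψ(n) = b^n if n is odd. Then limsup_{n→∞} ψ(n+1) / (ψ(1) + ψ(2) + ... + ψ(n)) = b² − 1. -/
/-!
Along even indices `n = 2m` the sum `ψ 1 + ⋯ + ψ n` is dominated by its odd terms, a geometric
series in `b²` whose sum is asymptotic to `b ^ (2m+1) / (b² - 1) = ψ (n+1) / (b² - 1)`; so the
ratio tends to `b² - 1`. Along odd indices the ratio is at most `a ^ (2m+2) / b ^ (2m+1)`, which
tends to `0`. The limsup is the larger of the two subsequential limits.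
-/

open Filter Finset Topology

theorem Nat.eventually_atTop_of_even_of_odd {P : ℕ → Prop} (h₀ : ∀ᶠ m in atTop, P (2 * m))
    (h₁ : ∀ᶠ m in atTop, P (2 * m + 1)) : ∀ᶠ n in atTop, P n := by
  obtain ⟨N₀, hN₀⟩ := eventually_atTop.1 h₀
  obtain ⟨N₁, hN₁⟩ := eventually_atTop.1 h₁
  refine eventually_atTop.2 ⟨2 * (N₀ + N₁), fun n hn => ?_⟩
  obtain ⟨m, rfl | rfl⟩ := Nat.even_or_odd' n
  · exact hN₀ m (by omega)
  · exact hN₁ m (by omega)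

theorem Real.limsup_eq_of_tendsto_even_of_tendsto_odd {u : ℕ → ℝ} {L L' : ℝ}
    (h₀ : Tendsto (fun m => u (2 * m)) atTop (𝓝 L))
    (h₁ : Tendsto (fun m => u (2 * m + 1)) atTop (𝓝 L')) (hL' : L' ≤ L) :
    limsup u atTop = L := by
  have two_mul_tendsto : Tendsto (2 * ·) atTop atTop :=
    StrictMono.tendsto_atTop fun _ _ h => by omega
  have frequently_ge {c : ℝ} (hc : c < L) : ∃ᶠ n in atTop, c ≤ u n :=
    two_mul_tendsto.frequently ((h₀.eventually_const_le hc).frequently)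
  have eventually_le {c : ℝ} (hc : L < c) : ∀ᶠ n in atTop, u n ≤ c :=
    Nat.eventually_atTop_of_even_of_odd (h₀.eventually_le_const hc)
      (h₁.eventually_le_const (hL'.trans_lt hc))
  have hbdd : IsBoundedUnder (· ≤ ·) atTop u :=
    isBoundedUnder_of_eventually_le (eventually_le (lt_add_one L))
  have hcobdd : IsCoboundedUnder (· ≤ ·) atTop u :=
    IsCoboundedUnder.of_frequently_ge (frequently_ge (sub_one_lt L))
  refine le_antisymm (forall_gt_imp_ge_iff_le_of_dense.mp fun c hc => ?_)
    (forall_lt_imp_le_iff_le_of_dense.mp fun c hc => ?_)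
  · exact limsup_le_of_le hcobdd (eventually_le hc)
  · exact le_limsup_of_frequently_le (frequently_ge hc) hbdd

theorem Finset.sum_Icc_one_two_mul {M : Type*} [AddCommMonoid M] (f : ℕ → M) (m : ℕ) :
    ∑ k ∈ Icc 1 (2 * m), f k = ∑ j ∈ range m, (f (2 * j + 1) + f (2 * j + 2)) := by
  induction m with
  | zero => simp
  | succ m ih =>
    rw [show 2 * (m + 1) = 2 * m + 1 + 1 by ring, sum_Icc_succ_top (by omega),
      sum_Icc_succ_top (by omega), ih, sum_range_succ, add_assoc]

theorem geom_sum_div_pow {q r : ℝ} (hq : q ≠ 1) (hr : r ≠ 0) (m : ℕ) :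
    (∑ j ∈ range m, q ^ j) / r ^ m = ((q / r) ^ m - r⁻¹ ^ m) / (q - 1) := by
  rw [geom_sum_eq hq, div_pow, inv_pow]
  field_simp

theorem tendsto_geom_sum_div_pow_self {r : ℝ} (hr : 1 < r) :
    Tendsto (fun m => (∑ j ∈ range m, r ^ j) / r ^ m) atTop (𝓝 (1 / (r - 1))) := by
  have hr₀ : r ≠ 0 := by linarith
  simp_rw [geom_sum_div_pow hr.ne' hr₀, div_self hr₀, one_pow]
  simpa using ((tendsto_pow_atTop_nhds_zero_of_lt_one (by positivity)
    (inv_lt_one_of_one_lt₀ hr)).const_sub 1).div_const (r - 1)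

theorem tendsto_geom_sum_div_pow_of_lt {q r : ℝ} (hq : 1 < q) (hqr : q < r) :
    Tendsto (fun m => (∑ j ∈ range m, q ^ j) / r ^ m) atTop (𝓝 0) := by
  have hr : 1 < r := hq.trans hqr
  simp_rw [geom_sum_div_pow hq.ne' (by linarith : r ≠ 0)]
  simpa using ((tendsto_pow_atTop_nhds_zero_of_lt_one (by positivity)
    ((div_lt_one (by linarith)).2 hqr)).sub (tendsto_pow_atTop_nhds_zero_of_lt_one
    (by positivity) (inv_lt_one_of_one_lt₀ hr))).div_const (q - 1)

def altPow (a b : ℝ) (n : ℕ) : ℝ := if Even n then a ^ n else b ^ n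

section

variable {a b : ℝ}

theorem altPow_pos (ha : 0 < a) (hb : 0 < b) (n : ℕ) : 0 < altPow a b n := by
  unfold altPow; split_ifs <;> positivity

theorem altPow_two_mul_add_one (m : ℕ) : altPow a b (2 * m + 1) = b * (b ^ 2) ^ m := by
  rw [altPow, if_neg (Nat.not_even_two_mul_add_one m), pow_succ, pow_mul, mul_comm]

theorem altPow_two_mul_add_two (m : ℕ) : altPow a b (2 * m + 2) = a ^ 2 * (a ^ 2) ^ m := by
  rw [show 2 * m + 2 = 2 * (m + 1) by ring, altPow, if_pos (even_two_mul _), pow_mul, pow_succ,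
    mul_comm]

theorem sum_Icc_altPow_two_mul (m : ℕ) : ∑ k ∈ Icc 1 (2 * m), altPow a b k =
    b * ∑ j ∈ range m, (b ^ 2) ^ j + a ^ 2 * ∑ j ∈ range m, (a ^ 2) ^ j := by
  simp only [sum_Icc_one_two_mul, altPow_two_mul_add_one, altPow_two_mul_add_two,
    sum_add_distrib, mul_sum]

theorem tendsto_sum_altPow_two_mul_div (ha : 1 < a) (hab : a < b) :
    Tendsto (fun m => (∑ k ∈ Icc 1 (2 * m), altPow a b k) / altPow a b (2 * m + 1)) atTop
      (𝓝 (1 / (b ^ 2 - 1))) := by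
  have hb : 0 < b := by linarith
  have hpow : 1 < a ^ 2 := one_lt_pow₀ ha two_ne_zero
  have hpow_lt : a ^ 2 < b ^ 2 := pow_lt_pow_left₀ hab (by linarith) two_ne_zero
  have key : ∀ m : ℕ, (∑ k ∈ Icc 1 (2 * m), altPow a b k) / altPow a b (2 * m + 1) =
      (∑ j ∈ range m, (b ^ 2) ^ j) / (b ^ 2) ^ m +
        a ^ 2 / b * ((∑ j ∈ range m, (a ^ 2) ^ j) / (b ^ 2) ^ m) := by
    intro m
    rw [sum_Icc_altPow_two_mul, altPow_two_mul_add_one]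
    field_simp
  simp_rw [key]
  simpa using (tendsto_geom_sum_div_pow_self (hpow.trans hpow_lt)).add
    ((tendsto_geom_sum_div_pow_of_lt hpow hpow_lt).const_mul (a ^ 2 / b))

theorem tendsto_altPow_div_sum_two_mul (ha : 1 < a) (hab : a < b) :
    Tendsto (fun m => altPow a b (2 * m + 1) / ∑ k ∈ Icc 1 (2 * m), altPow a b k) atTop
      (𝓝 (b ^ 2 - 1)) := by
  have hb : 1 < b ^ 2 := one_lt_pow₀ (ha.trans hab) two_ne_zero
  simpa using (tendsto_sum_altPow_two_mul_div ha hab).inv₀ (by simp; linarith)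

theorem tendsto_altPow_div_sum_two_mul_add_one (ha : 1 < a) (hab : a < b) :
    Tendsto (fun m => altPow a b (2 * m + 2) / ∑ k ∈ Icc 1 (2 * m + 1), altPow a b k) atTop
      (𝓝 0) := by
  have ha₀ : 0 < a := by linarith
  have hb₀ : 0 < b := by linarith
  have hle : ∀ m : ℕ, altPow a b (2 * m + 1) ≤ ∑ k ∈ Icc 1 (2 * m + 1), altPow a b k :=
    fun m => single_le_sum (fun k _ => (altPow_pos ha₀ hb₀ k).le) (by simp)
  have hbound : ∀ m : ℕ, altPow a b (2 * m + 2) / ∑ k ∈ Icc 1 (2 * m + 1), altPow a b k ≤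
      a ^ 2 / b * (a ^ 2 / b ^ 2) ^ m := fun m =>
    calc _ ≤ altPow a b (2 * m + 2) / altPow a b (2 * m + 1) :=
          div_le_div_of_nonneg_left (altPow_pos ha₀ hb₀ _).le (altPow_pos ha₀ hb₀ _) (hle m)
      _ = a ^ 2 / b * (a ^ 2 / b ^ 2) ^ m := by
          rw [altPow_two_mul_add_one, altPow_two_mul_add_two, div_pow]; field_simp
  have hlim : Tendsto (fun m : ℕ => a ^ 2 / b * (a ^ 2 / b ^ 2) ^ m) atTop (𝓝 0) := by
    simpa using (tendsto_pow_atTop_nhds_zero_of_lt_one (by positivity)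
      ((div_lt_one (by positivity)).2 (pow_lt_pow_left₀ hab ha₀.le two_ne_zero))).const_mul
      (a ^ 2 / b)
  exact squeeze_zero (fun m => div_nonneg (altPow_pos ha₀ hb₀ _).le
    (sum_nonneg fun k _ => (altPow_pos ha₀ hb₀ k).le)) hbound hlim

end

/-- For 1 < a < b and ψ(n) = aⁿ (n even), bⁿ (n odd),
limsup ψ(n+1)/(ψ(1)+⋯+ψ(n)) = b² − 1. -/
theorem limsup_alternating_ratio (a b : ℝ) (ha : 1 < a) (hab : a < b)
    (ψ : ℕ → ℝ) (hψ : ∀ n, ψ n = if Even n then a ^ n else b ^ n) :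
    limsup (fun n : ℕ => ψ (n + 1) / ∑ k ∈ Finset.Icc 1 n, ψ k) atTop = b ^ 2 - 1 := by
  obtain rfl : ψ = altPow a b := funext hψ
  have hb : 1 ≤ b ^ 2 := one_le_pow₀ (ha.trans hab).le
  exact Real.limsup_eq_of_tendsto_even_of_tendsto_odd (tendsto_altPow_div_sum_two_mul ha hab)
    (tendsto_altPow_div_sum_two_mul_add_one ha hab) (sub_nonneg.2 hb)
end

section
/- Suppose B ≥ 1, ε > 0, and ψ: ℕ → ℝ⁺ tends to infinity with ψ(n) ≤ (B+ε/2)^n for all sufficiently large n. With L_j = sup_{n ≥ j} exp( ψ(n) (B+ε)^{j−n} ), we have liminf_{n→∞} (log L_n)/ψ(n) = 1. -/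
open Filter Real

/-- If B ≥ 1, ε > 0, ψ : ℕ → ℝ⁺ tends to infinity with ψ(n) ≤ (B+ε/2)^n
eventually, and L_j = sup_{n ≥ j} exp(ψ(n)(B+ε)^{j−n}), then
liminf (log L_n)/ψ(n) = 1. -/
theorem liminf_log_L_div_psi (B ε : ℝ) (hB : 1 ≤ B) (hε : 0 < ε)
    (ψ : ℕ → ℝ) (hψpos : ∀ n, 1 ≤ n → 0 < ψ n)
    (hψtop : Tendsto ψ atTop atTop)
    (hψle : ∃ N : ℕ, ∀ n, N ≤ n → ψ n ≤ (B + ε / 2) ^ n)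
    (L : ℕ → ℝ)
    (hL : ∀ j, 1 ≤ j →
      IsGreatest {y | ∃ n, j ≤ n ∧ y = Real.exp (ψ n * (B + ε) ^ ((j : ℤ) - (n : ℤ)))}
        (L j)) :
    liminf (fun n : ℕ => Real.log (L n) / ψ n) atTop = 1 := by
  have hBε : (0:ℝ) < B + ε := by linarith
  -- exp (ψ j) ≤ L j for j ≥ 1
  have hlow : ∀ j, 1 ≤ j → Real.exp (ψ j) ≤ L j := by
    intro j hj
    have := (hL j hj).1
    have hmem : Real.exp (ψ j) ∈
        {y | ∃ n, j ≤ n ∧ y = Real.exp (ψ n * (B + ε) ^ ((j : ℤ) - (n : ℤ)))} := by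
      exact ⟨j, le_refl j, by simp⟩
    exact (hL j hj).2 hmem
  -- eventually 1 ≤ u n
  have hev : ∀ᶠ n in atTop, (1:ℝ) ≤ Real.log (L n) / ψ n := by
    filter_upwards [eventually_ge_atTop 1] with n hn
    have hψ := hψpos n hn
    have hlog : ψ n ≤ Real.log (L n) := by
      have := hlow n hn
      calc ψ n = Real.log (Real.exp (ψ n)) := (Real.log_exp _).symm
        _ ≤ Real.log (L n) := Real.log_le_log (Real.exp_pos _) this
    exact (one_le_div hψ).2 hlog
  -- frequently u n = 1
  have hfreq : ∀ j : ℕ, ∃ t, j + 1 ≤ t ∧ Real.log (L t) / ψ t = 1 := by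
    intro j
    set k := j + 1 with hk
    have hk1 : 1 ≤ k := Nat.le_add_left 1 j
    obtain ⟨t, htk, htval⟩ := (hL k hk1).1
    have ht1 : 1 ≤ t := le_trans hk1 htk
    -- show L t = exp (ψ t)
    have hgt : IsGreatest {y | ∃ n, t ≤ n ∧ y = Real.exp (ψ n * (B + ε) ^ ((t : ℤ) - (n : ℤ)))}
        (Real.exp (ψ t)) := by
      constructor
      · exact ⟨t, le_refl t, by simp⟩
      · rintro y ⟨m, hm, rfl⟩
        have hkm : k ≤ m := le_trans htk hm
        have hub : Real.exp (ψ m * (B + ε) ^ ((k : ℤ) - (m : ℤ))) ≤ L k :=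
          (hL k hk1).2 ⟨m, hkm, rfl⟩
        rw [htval] at hub
        have hle : ψ m * (B + ε) ^ ((k : ℤ) - (m : ℤ)) ≤ ψ t * (B + ε) ^ ((k : ℤ) - (t : ℤ)) :=
          Real.exp_le_exp.1 hub
        have hle2 : ψ m * (B + ε) ^ ((t : ℤ) - (m : ℤ)) ≤ ψ t := by
      -- multiply by (B+ε)^(t-k)
          have hpow : (0:ℝ) < (B + ε) ^ ((t : ℤ) - (k : ℤ)) := zpow_pos hBε _
          have := mul_le_mul_of_nonneg_right hle (le_of_lt hpow)
          calc ψ m * (B + ε) ^ ((t : ℤ) - (m : ℤ))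
              = ψ m * (B + ε) ^ ((k : ℤ) - (m : ℤ)) * (B + ε) ^ ((t : ℤ) - (k : ℤ)) := by
                rw [mul_assoc, ← zpow_add₀ (ne_of_gt hBε)]; ring_nf
            _ ≤ ψ t * (B + ε) ^ ((k : ℤ) - (t : ℤ)) * (B + ε) ^ ((t : ℤ) - (k : ℤ)) := this
            _ = ψ t := by
                rw [mul_assoc, ← zpow_add₀ (ne_of_gt hBε)]; ring_nf; simp
        exact Real.exp_le_exp.2 hle2
    have hLt : L t = Real.exp (ψ t) := (hL t ht1).unique hgt
    refine ⟨t, htk, ?_⟩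
    rw [hLt, Real.log_exp]
    exact div_self (ne_of_gt (hψpos t ht1))
  have hfreq' : ∃ᶠ n in atTop, Real.log (L n) / ψ n ≤ 1 := by
    rw [frequently_atTop]
    intro a
    obtain ⟨t, ht, heq⟩ := hfreq a
    exact ⟨t, le_trans (Nat.le_succ a) ht, le_of_eq heq⟩
  apply le_antisymm
  · exact liminf_le_of_frequently_le hfreq' ⟨1, by filter_upwards [hev] with n hn using hn⟩
  · exact le_liminf_of_le (IsCoboundedUnder.of_frequently_le hfreq') hev
end

section
/- For Lebesgue almost every x ∈ [0,1), limsup_{n→∞} (log a_n(x)) / (log n) = 1. -/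
open Filter MeasureTheory

/-- The Gauss map. -/
noncomputable def gaussMap (x : ℝ) : ℝ := Int.fract x⁻¹

/-- The n-th partial quotient (n ≥ 1) of the continued fraction expansion. -/
noncomputable def cfDigit (x : ℝ) (n : ℕ) : ℕ := ⌊(gaussMap^[n - 1] x)⁻¹⌋₊

/-!
Fix a word `w` of `N` partial quotients. The points whose expansion starts with `w` and whose
`N`-th Gauss iterate lies in `(α, β)` form (up to rationals) the interval between `ψ_w α` and
`ψ_w β`, where `ψ_w t = (p + p' t) / (q + q' t)` with continuants `0 ≤ q' ≤ q`; its length is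
`(β - α) / ((q + q' α) (q + q' β))`. Comparing with `α, β = 0, 1` shows that, conditionally on any
event determined by the first `N` digits, `a_{N+1} ≥ k` has probability at most `2 / k` and
`a_{N+1} < k` has probability at most `1 - 1 / k`. The first bound with `k = n ^ s`, `s > 1`, and
Borel–Cantelli give `a_n ≤ n ^ s` eventually. Iterating the second gives
`P(a_m < m for n₀ < m ≤ N) ≤ ∏ (1 - 1 / m) = n₀ / N → 0`, so `a_m ≥ m` infinitely often.
-/

open Set
open scoped ENNReal

def unitIrrationals : Set ℝ := {x | Irrational x ∧ x ∈ Ioo 0 1}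

lemma mapsTo_gaussMap : MapsTo gaussMap unitIrrationals unitIrrationals := by
  rintro x ⟨hirr, -, -⟩
  have hfract : Irrational (gaussMap x) := hirr.inv.sub_intCast _
  exact ⟨hfract, (Int.fract_nonneg _).lt_of_ne' hfract.ne_zero, Int.fract_lt_one _⟩

lemma iterate_gaussMap_mem_unitIrrationals {x : ℝ} (hx : x ∈ unitIrrationals) (n : ℕ) :
    gaussMap^[n] x ∈ unitIrrationals :=
  mapsTo_gaussMap.iterate n hx

lemma cfDigit_one (x : ℝ) : cfDigit x 1 = ⌊x⁻¹⌋₊ := rfl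

lemma cfDigit_succ (x : ℝ) (n : ℕ) : cfDigit x (n + 1) = cfDigit (gaussMap^[n] x) 1 := rfl

lemma cfDigit_succ_succ (x : ℝ) (n : ℕ) : cfDigit x (n + 2) = cfDigit (gaussMap x) (n + 1) := by
  rw [cfDigit_succ, cfDigit_succ (gaussMap x), Function.iterate_succ_apply]

lemma le_cfDigit_one_iff {x : ℝ} (hx : x ∈ unitIrrationals) {k : ℕ} (hk : 0 < k) :
    k ≤ cfDigit x 1 ↔ x < (k : ℝ)⁻¹ := by
  rw [cfDigit_one, Nat.le_floor_iff (inv_nonneg.2 hx.2.1.le),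
    le_inv_comm₀ (Nat.cast_pos.2 hk) hx.2.1]
  refine ⟨fun h => h.lt_of_ne fun heq => hx.1.ne_rat k⁻¹ ?_, le_of_lt⟩
  rw [heq]
  push_cast
  rfl

lemma one_le_cfDigit {x : ℝ} (hx : x ∈ unitIrrationals) (n : ℕ) : 1 ≤ cfDigit x n := by
  have hy := iterate_gaussMap_mem_unitIrrationals hx (n - 1)
  rw [show cfDigit x n = cfDigit (gaussMap^[n - 1] x) 1 from rfl, le_cfDigit_one_iff hy one_pos,
    Nat.cast_one, inv_one]
  exact hy.2.2

lemma inv_cfDigit_one_add_gaussMap {x : ℝ} (hx : x ∈ unitIrrationals) :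
    ((cfDigit x 1 : ℝ) + gaussMap x)⁻¹ = x := by
  rw [cfDigit_one, natCast_floor_eq_intCast_floor (inv_nonneg.2 hx.2.1.le), gaussMap,
    Int.floor_add_fract, inv_inv]

lemma inv_natCast_add_mem_unitIrrationals {y : ℝ} (hy : y ∈ unitIrrationals) {a : ℕ}
    (ha : 0 < a) : ((a : ℝ) + y)⁻¹ ∈ unitIrrationals := by
  have ha' : (1 : ℝ) ≤ a := Nat.one_le_cast.2 ha
  have hpos : 0 < (a : ℝ) + y := by linarith [hy.2.1]
  exact ⟨(hy.1.natCast_add a).inv, inv_pos.2 hpos, inv_lt_one_of_one_lt₀ (by linarith [hy.2.1])⟩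

lemma gaussMap_inv_natCast_add {y : ℝ} (hy : y ∈ Ico 0 1) (a : ℕ) :
    gaussMap ((a : ℝ) + y)⁻¹ = y := by
  rw [gaussMap, inv_inv, Int.fract_natCast_add, Int.fract_eq_self.2 hy]

lemma cfDigit_one_inv_natCast_add {y : ℝ} (hy : y ∈ Ico 0 1) (a : ℕ) :
    cfDigit ((a : ℝ) + y)⁻¹ 1 = a := by
  rw [cfDigit_one, inv_inv, add_comm, Nat.floor_add_natCast hy.1, Nat.floor_eq_zero.2 hy.2,
    zero_add]

-- `toPNat'` sends `0` to `1`; this never happens at points of `unitIrrationals`.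
noncomputable def digitWord (x : ℝ) : ℕ → List ℕ+
  | 0 => []
  | n + 1 => (cfDigit x 1).toPNat' :: digitWord (gaussMap x) n

@[simp] lemma length_digitWord (x : ℝ) (n : ℕ) : (digitWord x n).length = n := by
  induction n generalizing x with
  | zero => rfl
  | succ n ih => simp [digitWord, ih]

lemma cfDigit_eq_of_digitWord_eq {x y : ℝ} (hx : x ∈ unitIrrationals) (hy : y ∈ unitIrrationals)
    {N : ℕ} (h : digitWord x N = digitWord y N) {m : ℕ} (hm : 0 < m) (hmN : m ≤ N) :
    cfDigit x m = cfDigit y m := by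
  induction N generalizing x y m with
  | zero => omega
  | succ N ih =>
    obtain ⟨hhead, htail⟩ := List.cons_eq_cons.1 h
    obtain ⟨m, rfl⟩ : ∃ k, m = k + 1 := ⟨m - 1, by omega⟩
    cases m with
    | zero =>
      rw [← PNat.toPNat'_coe (one_le_cfDigit hx 1), ← PNat.toPNat'_coe (one_le_cfDigit hy 1),
        hhead]
    | succ m =>
      rw [cfDigit_succ_succ, cfDigit_succ_succ]
      exact ih (mapsTo_gaussMap hx) (mapsTo_gaussMap hy) htail m.succ_pos (by omega)

noncomputable def cfWordMap : List ℕ+ → ℝ → ℝ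
  | [], t => t
  | a :: w, t => ((a : ℝ) + cfWordMap w t)⁻¹

lemma cfWordMap_nonneg (w : List ℕ+) {t : ℝ} (ht : 0 ≤ t) : 0 ≤ cfWordMap w t := by
  induction w with
  | nil => exact ht
  | cons a w ih => exact inv_nonneg.2 (by positivity)

lemma natCast_add_cfWordMap_pos (a : ℕ+) (w : List ℕ+) {t : ℝ} (ht : 0 ≤ t) :
    0 < (a : ℝ) + cfWordMap w t :=
  add_pos_of_pos_of_nonneg (Nat.cast_pos.2 a.pos) (cfWordMap_nonneg w ht)

lemma cfWordMap_mem_unitIrrationals (w : List ℕ+) {y : ℝ} (hy : y ∈ unitIrrationals) :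
    cfWordMap w y ∈ unitIrrationals := by
  induction w with
  | nil => exact hy
  | cons a w ih => exact inv_natCast_add_mem_unitIrrationals ih a.pos

lemma iterate_gaussMap_cfWordMap (w : List ℕ+) {y : ℝ} (hy : y ∈ unitIrrationals) :
    gaussMap^[w.length] (cfWordMap w y) = y := by
  induction w with
  | nil => rfl
  | cons a w ih =>
    rw [List.length_cons, Function.iterate_succ_apply, cfWordMap,
      gaussMap_inv_natCast_add (Ioo_subset_Ico_self (cfWordMap_mem_unitIrrationals w hy).2), ih]

lemma digitWord_cfWordMap (w : List ℕ+) {y : ℝ} (hy : y ∈ unitIrrationals) :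
    digitWord (cfWordMap w y) w.length = w := by
  induction w with
  | nil => rfl
  | cons a w ih =>
    have hmem := Ioo_subset_Ico_self (cfWordMap_mem_unitIrrationals w hy).2
    rw [List.length_cons, digitWord, cfWordMap, cfDigit_one_inv_natCast_add hmem,
      gaussMap_inv_natCast_add hmem, ih, PNat.coe_toPNat']

lemma cfWordMap_digitWord {x : ℝ} (hx : x ∈ unitIrrationals) (n : ℕ) :
    cfWordMap (digitWord x n) (gaussMap^[n] x) = x := by
  induction n generalizing x with
  | zero => rfl
  | succ n ih =>
    rw [digitWord, cfWordMap, Function.iterate_succ_apply, ih (mapsTo_gaussMap hx),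
      PNat.toPNat'_coe (one_le_cfDigit hx 1), inv_cfDigit_one_add_gaussMap hx]

lemma Irrational.of_cfWordMap {w : List ℕ+} {t : ℝ} (h : Irrational (cfWordMap w t)) :
    Irrational t := by
  induction w with
  | nil => exact h
  | cons a w ih => exact ih (h.of_inv.of_natCast_add a)

lemma continuousOn_cfWordMap (w : List ℕ+) : ContinuousOn (cfWordMap w) (Ici 0) := by
  induction w with
  | nil => exact continuousOn_id
  | cons a w ih =>
    exact (continuousOn_const.add ih).inv₀ fun t ht => (natCast_add_cfWordMap_pos a w ht).ne'

lemma strictMonoOn_or_strictAntiOn_cfWordMap (w : List ℕ+) :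
    StrictMonoOn (cfWordMap w) (Ici 0) ∨ StrictAntiOn (cfWordMap w) (Ici 0) := by
  induction w with
  | nil => exact Or.inl fun _ _ _ _ h => h
  | cons a w ih =>
    rcases ih with hmono | hanti
    · exact Or.inr fun u hu v hv huv => inv_strictAnti₀ (natCast_add_cfWordMap_pos a w hu)
        ((add_lt_add_iff_left _).2 (hmono hu hv huv))
    · exact Or.inl fun u hu v hv huv => inv_strictAnti₀ (natCast_add_cfWordMap_pos a w hv)
        ((add_lt_add_iff_left _).2 (hanti hu hv huv))

lemma cfWordMap_mem_uIoo (w : List ℕ+) {α β y : ℝ} (hα : 0 ≤ α) (hy : y ∈ Ioo α β) :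
    cfWordMap w y ∈ uIoo (cfWordMap w α) (cfWordMap w β) := by
  have hα' : α ∈ Ici (0 : ℝ) := hα
  have hy' : y ∈ Ici (0 : ℝ) := hα.trans hy.1.le
  have hβ' : β ∈ Ici (0 : ℝ) := hα.trans (hy.1.trans hy.2).le
  rcases strictMonoOn_or_strictAntiOn_cfWordMap w with hmono | hanti
  · exact mem_uIoo_of_lt (hmono hα' hy' hy.1) (hmono hy' hβ' hy.2)
  · exact mem_uIoo_of_gt (hanti hy' hβ' hy.2) (hanti hα' hy' hy.1)

/-- The continuants `(p, q, p', q')` of `w = [a₁, …, aₙ]`, i.e. `(pₙ, qₙ, pₙ₋₁, qₙ₋₁)`, so that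
`cfWordMap w t = (p + p' t) / (q + q' t)`. -/
def continuants : List ℕ+ → ℕ × ℕ × ℕ × ℕ
  | [] => (0, 1, 1, 0)
  | a :: w =>
    let c := continuants w
    (c.2.1, a * c.2.1 + c.1, c.2.2.2, a * c.2.2.2 + c.2.2.1)

section Continuants

variable (w : List ℕ+)

def cfP : ℕ := (continuants w).1
def cfQ : ℕ := (continuants w).2.1
def cfP' : ℕ := (continuants w).2.2.1
def cfQ' : ℕ := (continuants w).2.2.2

-- The last conjunct only serves to carry the induction.
lemma cfQ_pos_and_cfQ'_le_cfQ :
    0 < cfQ w ∧ cfQ' w ≤ cfQ w ∧ cfP' w + cfQ' w ≤ cfP w + cfQ w := by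
  induction w with
  | nil => simp [cfP, cfQ, cfP', cfQ', continuants]
  | cons a w ih =>
    obtain ⟨hq, hq'q, hsum⟩ := ih
    simp only [cfP, cfQ, cfP', cfQ', continuants] at *
    have ha := a.pos
    refine ⟨by positivity, ?_, ?_⟩ <;> nlinarith

lemma cfQ_pos : 0 < cfQ w := (cfQ_pos_and_cfQ'_le_cfQ w).1

lemma cfQ'_le_cfQ : cfQ' w ≤ cfQ w := (cfQ_pos_and_cfQ'_le_cfQ w).2.1

lemma cfP'_mul_cfQ_sub_cfP_mul_cfQ' :
    (cfP' w : ℝ) * cfQ w - cfP w * cfQ' w = (-1) ^ w.length := by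
  induction w with
  | nil => simp [cfP, cfQ, cfP', cfQ', continuants]
  | cons a w ih =>
    simp only [cfP, cfQ, cfP', cfQ', continuants, List.length_cons, pow_succ] at *
    push_cast
    linear_combination (-1 : ℝ) * ih

variable {w}

lemma cfQ_add_cfQ'_mul_pos {t : ℝ} (ht : 0 ≤ t) : 0 < (cfQ w : ℝ) + cfQ' w * t := by
  have := cfQ_pos w
  positivity

lemma cfWordMap_eq_div {t : ℝ} (ht : 0 ≤ t) :
    cfWordMap w t = (cfP w + cfP' w * t) / (cfQ w + cfQ' w * t) := by
  induction w with
  | nil => simp [cfWordMap, cfP, cfQ, cfP', cfQ', continuants]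
  | cons a w ih =>
    have hden := (cfQ_add_cfQ'_mul_pos (w := w) ht).ne'
    rw [cfWordMap, ih, add_div' _ _ _ hden, inv_div]
    simp only [cfP, cfQ, cfP', cfQ', continuants]
    push_cast
    ring

lemma abs_cfWordMap_sub {u v : ℝ} (hu : 0 ≤ u) (hv : 0 ≤ v) :
    |cfWordMap w u - cfWordMap w v| =
      |u - v| / ((cfQ w + cfQ' w * u) * (cfQ w + cfQ' w * v)) := by
  have hdu := cfQ_add_cfQ'_mul_pos (w := w) hu
  have hdv := cfQ_add_cfQ'_mul_pos (w := w) hv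
  rw [cfWordMap_eq_div hu, cfWordMap_eq_div hv, div_sub_div _ _ hdu.ne' hdv.ne', abs_div,
    abs_of_pos (mul_pos hdu hdv)]
  congr 1
  rw [show ((cfP w : ℝ) + cfP' w * u) * (cfQ w + cfQ' w * v) -
        (cfQ w + cfQ' w * u) * (cfP w + cfP' w * v) =
        ((cfP' w : ℝ) * cfQ w - cfP w * cfQ' w) * (u - v) by ring,
    cfP'_mul_cfQ_sub_cfP_mul_cfQ', abs_mul, abs_pow, abs_neg, abs_one, one_pow, one_mul]

end Continuants

def cfCylinder (w : List ℕ+) (α β : ℝ) : Set ℝ :=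
  {x | x ∈ unitIrrationals ∧ digitWord x w.length = w ∧ gaussMap^[w.length] x ∈ Ioo α β}

lemma cfCylinder_eq {w : List ℕ+} {α β : ℝ} (hα : 0 ≤ α) (hαβ : α ≤ β) (hβ : β ≤ 1) :
    cfCylinder w α β = uIoo (cfWordMap w α) (cfWordMap w β) ∩ {x | Irrational x} := by
  ext x
  constructor
  · rintro ⟨hx, hword, hiter⟩
    have hx' := cfWordMap_digitWord hx w.length
    rw [hword] at hx'
    exact ⟨hx' ▸ cfWordMap_mem_uIoo w hα hiter, hx.1⟩
  · rintro ⟨hmem, hirr⟩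
    have hIcc : Icc α β ⊆ Ici 0 := fun t ht => hα.trans ht.1
    obtain ⟨y, hy, rfl⟩ := intermediate_value_uIcc
      (uIcc_of_le hαβ ▸ (continuousOn_cfWordMap w).mono hIcc) (uIoo_subset_uIcc_self hmem)
    rw [uIcc_of_le hαβ] at hy
    have hyα : y ≠ α := by rintro rfl; exact left_notMem_uIoo hmem
    have hyβ : y ≠ β := by rintro rfl; exact right_notMem_uIoo hmem
    have hy' : y ∈ Ioo α β := ⟨hy.1.lt_of_ne' hyα, hy.2.lt_of_ne hyβ⟩
    have hyU : y ∈ unitIrrationals :=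
      ⟨hirr.of_cfWordMap, hα.trans_lt hy'.1, hy'.2.trans_le hβ⟩
    exact ⟨cfWordMap_mem_unitIrrationals w hyU, digitWord_cfWordMap w hyU,
      (iterate_gaussMap_cfWordMap w hyU).symm ▸ hy'⟩

lemma ae_irrational : ∀ᵐ x : ℝ, Irrational x :=
  measure_mono_null (fun _ hx => not_not.1 hx)
    ((countable_range ((↑) : ℚ → ℝ)).measure_zero _)

lemma measurableSet_irrational : MeasurableSet {x : ℝ | Irrational x} :=
  (countable_range ((↑) : ℚ → ℝ)).measurableSet.compl

lemma measurableSet_cfCylinder (w : List ℕ+) {α β : ℝ} (hα : 0 ≤ α) (hαβ : α ≤ β)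
    (hβ : β ≤ 1) : MeasurableSet (cfCylinder w α β) := by
  rw [cfCylinder_eq hα hαβ hβ]
  exact measurableSet_Ioo.inter measurableSet_irrational

lemma volume_cfCylinder (w : List ℕ+) {α β : ℝ} (hα : 0 ≤ α) (hαβ : α ≤ β) (hβ : β ≤ 1) :
    volume (cfCylinder w α β) =
      ENNReal.ofReal ((β - α) / ((cfQ w + cfQ' w * β) * (cfQ w + cfQ' w * α))) := by
  rw [cfCylinder_eq hα hαβ hβ, measure_inter_conull ae_irrational, Real.volume_uIoo,
    abs_cfWordMap_sub (hα.trans hαβ) hα, abs_of_nonneg (sub_nonneg.2 hαβ)]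

lemma volume_cfCylinder_zero_le (w : List ℕ+) {c : ℝ} (hc : 0 ≤ c) (hc1 : c ≤ 1) :
    volume (cfCylinder w 0 c) ≤ ENNReal.ofReal (2 * c) * volume (cfCylinder w 0 1) := by
  rw [volume_cfCylinder w le_rfl hc hc1, volume_cfCylinder w le_rfl zero_le_one le_rfl,
    ← ENNReal.ofReal_mul (by positivity)]
  refine ENNReal.ofReal_le_ofReal ?_
  have hq : (0 : ℝ) < cfQ w := Nat.cast_pos.2 (cfQ_pos w)
  have hq' : (cfQ' w : ℝ) ≤ cfQ w := Nat.cast_le.2 (cfQ'_le_cfQ w)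
  simp only [sub_zero, mul_zero, add_zero, mul_one]
  rw [div_le_iff₀ (by positivity), mul_one_div, div_mul_eq_mul_div, le_div_iff₀ (by positivity)]
  have hcq := mul_nonneg hc hq.le
  nlinarith [mul_nonneg hcq (sub_nonneg.2 hq'),
    mul_nonneg hcq (mul_nonneg (Nat.cast_nonneg (cfQ' w)) hc)]

lemma volume_cfCylinder_one_le (w : List ℕ+) {c : ℝ} (hc : 0 ≤ c) (hc1 : c ≤ 1) :
    volume (cfCylinder w c 1) ≤ ENNReal.ofReal (1 - c) * volume (cfCylinder w 0 1) := by
  rw [volume_cfCylinder w hc hc1 le_rfl, volume_cfCylinder w le_rfl zero_le_one le_rfl,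
    ← ENNReal.ofReal_mul (by linarith)]
  refine ENNReal.ofReal_le_ofReal ?_
  have hq : (0 : ℝ) < cfQ w := Nat.cast_pos.2 (cfQ_pos w)
  simp only [sub_zero, mul_zero, add_zero, mul_one_div]
  gcongr
  exact le_add_of_nonneg_right (by positivity)

lemma disjoint_cfCylinder {v w : List ℕ+} (hvw : v ≠ w) (hlen : v.length = w.length)
    (α β α' β' : ℝ) : Disjoint (cfCylinder v α β) (cfCylinder w α' β') :=
  disjoint_left.2 fun _ hv hw => hvw (hv.2.1.symm.trans (hlen ▸ hw.2.1))

lemma MeasureTheory.measure_iUnion_le_mul_measure_iUnion {α ι : Type*} [MeasurableSpace α]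
    [Countable ι] {μ : Measure α} {s t : ι → Set α} {c : ℝ≥0∞}
    (hd : Pairwise (Function.onFun Disjoint s)) (hs : ∀ i, MeasurableSet (s i))
    (h : ∀ i, μ (t i) ≤ c * μ (s i)) : μ (⋃ i, t i) ≤ c * μ (⋃ i, s i) :=
  calc μ (⋃ i, t i) ≤ ∑' i, μ (t i) := measure_iUnion_le t
    _ ≤ ∑' i, c * μ (s i) := ENNReal.tsum_le_tsum h
    _ = c * μ (⋃ i, s i) := by rw [ENNReal.tsum_mul_left, measure_iUnion hd hs]

lemma volume_setOf_iterate_gaussMap_mem_le {A : Set ℝ} {N : ℕ} {α β : ℝ} {c : ℝ≥0∞}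
    (hAU : A ⊆ unitIrrationals) (hA : ∀ x ∈ A, cfCylinder (digitWord x N) 0 1 ⊆ A)
    (hc : ∀ w : List ℕ+, w.length = N →
      volume (cfCylinder w α β) ≤ c * volume (cfCylinder w 0 1)) :
    volume {x ∈ A | gaussMap^[N] x ∈ Ioo α β} ≤ c * volume A := by
  let ι := {w : List ℕ+ // w.length = N ∧ cfCylinder w 0 1 ⊆ A}
  have hcover : {x ∈ A | gaussMap^[N] x ∈ Ioo α β} ⊆ ⋃ w : ι, cfCylinder w.1 α β := by
    rintro x ⟨hx, hiter⟩
    refine mem_iUnion.2 ⟨⟨digitWord x N, length_digitWord x N, hA x hx⟩, hAU hx, ?_⟩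
    simpa using hiter
  have hsub : (⋃ w : ι, cfCylinder w.1 0 1) ⊆ A := iUnion_subset fun w => w.2.2
  have hdisj : Pairwise (Function.onFun Disjoint fun w : ι => cfCylinder w.1 0 1) :=
    fun v w hvw =>
      disjoint_cfCylinder (Subtype.coe_injective.ne hvw) (v.2.1.trans w.2.1.symm) _ _ _ _
  calc volume {x ∈ A | gaussMap^[N] x ∈ Ioo α β} ≤ volume (⋃ w : ι, cfCylinder w.1 α β) :=
        measure_mono hcover
    _ ≤ c * volume (⋃ w : ι, cfCylinder w.1 0 1) :=
        measure_iUnion_le_mul_measure_iUnion hdisj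
          (fun w => measurableSet_cfCylinder w.1 le_rfl zero_le_one le_rfl) fun w => hc w.1 w.2.1
    _ ≤ c * volume A := by gcongr

lemma volume_setOf_le_cfDigit_le {A : Set ℝ} {N : ℕ} (hAU : A ⊆ unitIrrationals)
    (hA : ∀ x ∈ A, cfCylinder (digitWord x N) 0 1 ⊆ A) {k : ℕ} (hk : 0 < k) :
    volume {x ∈ A | k ≤ cfDigit x (N + 1)} ≤ ENNReal.ofReal (2 / k) * volume A := by
  have hk' : (k : ℝ)⁻¹ ≤ 1 := inv_le_one_of_one_le₀ (Nat.one_le_cast.2 hk)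
  have hsub :
      {x ∈ A | k ≤ cfDigit x (N + 1)} ⊆ {x ∈ A | gaussMap^[N] x ∈ Ioo 0 (k : ℝ)⁻¹} := by
    rintro x ⟨hx, hdigit⟩
    have hy := iterate_gaussMap_mem_unitIrrationals (hAU hx) N
    exact ⟨hx, hy.2.1, (le_cfDigit_one_iff hy hk).1 hdigit⟩
  refine (measure_mono hsub).trans (volume_setOf_iterate_gaussMap_mem_le hAU hA fun w _ => ?_)
  rw [div_eq_mul_inv]
  exact volume_cfCylinder_zero_le w (by positivity) hk'

lemma volume_setOf_cfDigit_lt_le {A : Set ℝ} {N : ℕ} (hAU : A ⊆ unitIrrationals)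
    (hA : ∀ x ∈ A, cfCylinder (digitWord x N) 0 1 ⊆ A) {k : ℕ} (hk : 0 < k) :
    volume {x ∈ A | cfDigit x (N + 1) < k} ≤ ENNReal.ofReal (1 - (k : ℝ)⁻¹) * volume A := by
  have hk' : (k : ℝ)⁻¹ ≤ 1 := inv_le_one_of_one_le₀ (Nat.one_le_cast.2 hk)
  have hsub :
      {x ∈ A | cfDigit x (N + 1) < k} ⊆ {x ∈ A | gaussMap^[N] x ∈ Ioo (k : ℝ)⁻¹ 1} := by
    rintro x ⟨hx, hdigit⟩
    have hy := iterate_gaussMap_mem_unitIrrationals (hAU hx) N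
    have hne : gaussMap^[N] x ≠ (k : ℝ)⁻¹ := fun h => hy.1.ne_rat k⁻¹ <| by
      rw [h]
      push_cast
      rfl
    exact ⟨hx, (not_lt.1 fun h => hdigit.not_ge ((le_cfDigit_one_iff hy hk).2 h)).lt_of_ne' hne,
      hy.2.2⟩
  exact (measure_mono hsub).trans (volume_setOf_iterate_gaussMap_mem_le hAU hA fun w _ =>
    volume_cfCylinder_one_le w (by positivity) hk')

lemma volume_unitIrrationals_le_one : volume unitIrrationals ≤ 1 :=
  (measure_mono fun _ hx => hx.2).trans (by simp)

lemma ae_eventually_cfDigit_lt_rpow {s : ℝ} (hs : 1 < s) :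
    ∀ᵐ x, x ∈ unitIrrationals → ∀ᶠ n : ℕ in atTop, (cfDigit x n : ℝ) < (n : ℝ) ^ s := by
  let r : ℕ → ℝ := fun n => ((n + 1 : ℕ) : ℝ) ^ s
  have hr : ∀ n, 0 < r n := fun n => by positivity
  let E : ℕ → Set ℝ := fun n => {x ∈ unitIrrationals | ⌈r n⌉₊ ≤ cfDigit x (n + 1)}
  have hE : ∀ n, volume (E n) ≤ ENNReal.ofReal (2 * (r n)⁻¹) := fun n =>
    calc volume (E n) ≤ ENNReal.ofReal (2 / ⌈r n⌉₊) * volume unitIrrationals :=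
          volume_setOf_le_cfDigit_le subset_rfl (fun _ _ _ hy => hy.1) (Nat.ceil_pos.2 (hr n))
      _ ≤ ENNReal.ofReal (2 * (r n)⁻¹) * 1 := by
          gcongr
          · rw [div_eq_mul_inv]
            gcongr
            exact Nat.le_ceil _
          · exact volume_unitIrrationals_le_one
      _ = ENNReal.ofReal (2 * (r n)⁻¹) := mul_one _
  have hsummable : Summable fun n => 2 * (r n)⁻¹ :=
    ((summable_nat_add_iff 1).2 (Real.summable_nat_rpow_inv.2 hs)).mul_left 2
  have hsum : ∑' n, volume (E n) ≠ ⊤ :=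
    ne_top_of_le_ne_top (ENNReal.ofReal_tsum_of_nonneg (fun n => by positivity) hsummable ▸
      ENNReal.ofReal_ne_top) (ENNReal.tsum_le_tsum hE)
  filter_upwards [ae_eventually_notMem hsum] with x hx hxU
  rw [← map_add_atTop_eq_nat 1, eventually_map]
  filter_upwards [hx] with n hn
  exact_mod_cast Nat.lt_ceil.1 (not_le.1 fun h => hn ⟨hxU, h⟩)

lemma ae_forall_eventually_cfDigit_le_rpow :
    ∀ᵐ x, x ∈ unitIrrationals →
      ∀ s : ℝ, 1 < s → ∀ᶠ n : ℕ in atTop, (cfDigit x n : ℝ) ≤ (n : ℝ) ^ s := by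
  have h := ae_all_iff.2 fun j : ℕ =>
    ae_eventually_cfDigit_lt_rpow (s := 1 + 1 / (j + 1)) (lt_add_of_pos_right 1 (by positivity))
  filter_upwards [h] with x hx hxU s hs
  obtain ⟨j, hj⟩ := exists_nat_one_div_lt (sub_pos.2 hs)
  filter_upwards [hx j hxU, eventually_ge_atTop 1] with n hn hn1
  exact hn.le.trans (Real.rpow_le_rpow_of_exponent_le (Nat.one_le_cast.2 hn1) (by linarith))

lemma volume_setOf_forall_cfDigit_lt_le {n₀ : ℕ} (hn₀ : 0 < n₀) {N : ℕ} (hN : n₀ ≤ N) :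
    volume {x ∈ unitIrrationals | ∀ m, n₀ < m → m ≤ N → cfDigit x m < m} ≤
      ENNReal.ofReal (n₀ / N) := by
  induction N, hN using Nat.le_induction with
  | base =>
    rw [div_self (Nat.cast_ne_zero.2 hn₀.ne'), ENNReal.ofReal_one]
    exact (measure_mono fun _ hx => hx.1).trans volume_unitIrrationals_le_one
  | succ N hN ih =>
    set G := {x ∈ unitIrrationals | ∀ m, n₀ < m → m ≤ N → cfDigit x m < m}
    have hcyl : ∀ x ∈ G, cfCylinder (digitWord x N) 0 1 ⊆ G := by
      rintro x hx y ⟨hyU, hword, -⟩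
      rw [length_digitWord] at hword
      refine ⟨hyU, fun m hm hmN => ?_⟩
      rw [cfDigit_eq_of_digitWord_eq hyU hx.1 hword (by omega) hmN]
      exact hx.2 m hm hmN
    have hsub : {x ∈ unitIrrationals | ∀ m, n₀ < m → m ≤ N + 1 → cfDigit x m < m} ⊆
        {x ∈ G | cfDigit x (N + 1) < N + 1} := fun x hx =>
      ⟨⟨hx.1, fun m hm hmN => hx.2 m hm (by omega)⟩, hx.2 (N + 1) (by omega) le_rfl⟩
    have hN0 : (0 : ℝ) < N := Nat.cast_pos.2 (hn₀.trans_le hN)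
    calc _ ≤ volume {x ∈ G | cfDigit x (N + 1) < N + 1} := measure_mono hsub
      _ ≤ ENNReal.ofReal (1 - ((N + 1 : ℕ) : ℝ)⁻¹) * volume G :=
          volume_setOf_cfDigit_lt_le (fun _ hx => hx.1) hcyl N.succ_pos
      _ ≤ ENNReal.ofReal (1 - ((N + 1 : ℕ) : ℝ)⁻¹) * ENNReal.ofReal (n₀ / N) := by gcongr
      _ = ENNReal.ofReal (n₀ / (N + 1 : ℕ)) := by
          rw [← ENNReal.ofReal_mul (sub_nonneg.2 (inv_le_one_of_one_le₀ (by simp)))]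
          congr 1
          push_cast
          field_simp
          ring

lemma volume_setOf_forall_cfDigit_lt_eq_zero {n₀ : ℕ} (hn₀ : 0 < n₀) :
    volume {x ∈ unitIrrationals | ∀ m, n₀ < m → cfDigit x m < m} = 0 := by
  have htend : Tendsto (fun N : ℕ => ENNReal.ofReal (n₀ / N)) atTop (nhds 0) := by
    simpa using ENNReal.tendsto_ofReal (tendsto_const_div_atTop_nhds_zero_nat (n₀ : ℝ))
  refine le_antisymm (ge_of_tendsto htend ?_) bot_le
  filter_upwards [eventually_ge_atTop n₀] with N hN
  refine le_trans (measure_mono ?_) (volume_setOf_forall_cfDigit_lt_le hn₀ hN)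
  exact fun x hx => ⟨hx.1, fun m hm _ => hx.2 m hm⟩

lemma ae_frequently_le_cfDigit :
    ∀ᵐ x, x ∈ unitIrrationals → ∃ᶠ m : ℕ in atTop, (m : ℝ) ≤ cfDigit x m := by
  filter_upwards [ae_all_iff.2 fun n₀ : ℕ => measure_eq_zero_iff_ae_notMem.1
    (volume_setOf_forall_cfDigit_lt_eq_zero n₀.succ_pos)] with x hx hxU
  refine frequently_atTop.2 fun n₀ => ?_
  by_contra! h
  exact hx n₀ ⟨hxU, fun m hm => by exact_mod_cast h m (by omega)⟩

lemma Filter.limsup_eq_of_forall_gt_eventually_le_of_frequently_ge {α : Type*} {f : Filter α}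
    {u : α → ℝ} {c : ℝ} (hle : ∀ y > c, ∀ᶠ a in f, u a ≤ y) (hge : ∃ᶠ a in f, c ≤ u a) :
    limsup u f = c := by
  have hbdd : IsBoundedUnder (· ≤ ·) f u :=
    isBoundedUnder_of_eventually_le (hle (c + 1) (lt_add_one c))
  exact le_antisymm ((limsup_le_iff' (IsCoboundedUnder.of_frequently_ge hge) hbdd).2 hle)
    (le_limsup_of_frequently_le hge hbdd)

lemma limsup_log_div_log_eq_one {a : ℕ → ℝ} (hpos : ∀ n, 0 < a n)
    (hup : ∀ s : ℝ, 1 < s → ∀ᶠ n : ℕ in atTop, a n ≤ (n : ℝ) ^ s)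
    (hlow : ∃ᶠ n : ℕ in atTop, (n : ℝ) ≤ a n) :
    limsup (fun n : ℕ => Real.log (a n) / Real.log n) atTop = 1 := by
  refine limsup_eq_of_forall_gt_eventually_le_of_frequently_ge (fun s hs => ?_) ?_
  · filter_upwards [hup s hs, eventually_gt_atTop 1] with n hn hn1
    rw [div_le_iff₀ (Real.log_pos (Nat.one_lt_cast.2 hn1)), ← Real.log_rpow (by positivity)]
    exact Real.log_le_log (hpos n) hn
  · refine (hlow.and_eventually (eventually_gt_atTop 1)).mono fun n ⟨hn, hn1⟩ => ?_
    rw [le_div_iff₀ (Real.log_pos (Nat.one_lt_cast.2 hn1)), one_mul]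
    exact Real.log_le_log (by positivity) hn

/-- For Lebesgue almost every x ∈ [0,1), limsup (log a_n(x))/(log n) = 1. -/
theorem limsup_log_digit_div_log_n :
    ∀ᵐ x ∂(volume.restrict (Set.Ico (0 : ℝ) 1)),
      limsup (fun n : ℕ => Real.log (cfDigit x n : ℝ) / Real.log (n : ℝ)) atTop = 1 := by
  filter_upwards [ae_restrict_mem measurableSet_Ico, ae_restrict_of_ae ae_irrational,
    ae_restrict_of_ae ae_forall_eventually_cfDigit_le_rpow,
    ae_restrict_of_ae ae_frequently_le_cfDigit] with x hx hirr hup hlow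
  have hxU : x ∈ unitIrrationals := ⟨hirr, hx.1.lt_of_ne' hirr.ne_zero, hx.2⟩
  exact limsup_log_div_log_eq_one (fun n => Nat.cast_pos.2 (one_le_cfDigit hxU n)) (hup hxU)
    (hlow hxU)
end

section
/- For any reals 0 < ε < 1 and any sequence (ψ(k))_{k≥1} of positive reals, and positive integers (σ_1,...,σ_n) with exp((1−ε)ψ(k)) ≤ σ_k ≤ exp((1+ε)ψ(k)) for 1 ≤ k ≤ n, the set J_n(σ_1,...,σ_n) = ⋃ { I_{n+1}(σ_1,...,σ_n,σ) : exp((1−ε)ψ(n+1)) ≤ σ ≤ exp((1+ε)ψ(n+1)) } has Lebesgue measure at most exp( −(1−ε)ψ(n+1) − 2(1−ε) ∑_{k=1}^n ψ(k) ). -/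
open MeasureTheory

/-- The fundamental interval J_n(σ_1,...,σ_n): the union of all cylinders of
order n+1 extending (σ_1,...,σ_n) by a digit σ with
exp((1−ε)ψ(n+1)) ≤ σ ≤ exp((1+ε)ψ(n+1)). -/
def cfJ (n : ℕ) (σ : ℕ → ℕ) (ε : ℝ) (ψ : ℕ → ℝ) : Set ℝ :=
  {x | x ∈ Set.Ico (0 : ℝ) 1 ∧ (∀ i, 1 ≤ i → i ≤ n → cfDigit x i = σ i) ∧
    Real.exp ((1 - ε) * ψ (n + 1)) ≤ (cfDigit x (n + 1) : ℝ) ∧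
    (cfDigit x (n + 1) : ℝ) ≤ Real.exp ((1 + ε) * ψ (n + 1))}

/-! Write `G` for the Gauss map, so that `x = 1/(σ₁ + G x)`. The points whose first digits are
`σ₁, …, σₙ` and whose next digit is at least `T` form the image, under the map `y ↦ 1/(σ₁ + y)`,
which is `σ₁⁻²`-Lipschitz on `[0, ∞)`, of the analogous set for `σ₂, …, σₙ`; with no prescribed
digits that set lies in `(0, 1/T]`. By induction its measure is at most `T⁻¹ ∏ σₖ⁻²`, and taking
`T = exp((1-ε)ψ(n+1))` together with `σₖ ≥ exp((1-ε)ψ(k))` gives the bound. -/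

open Set Real

lemma Finset.prod_Icc_one_succ {M : Type*} [CommMonoid M] (f : ℕ → M) (n : ℕ) :
    ∏ k ∈ Finset.Icc 1 (n + 1), f k = f 1 * ∏ k ∈ Finset.Icc 1 n, f (k + 1) := by
  rw [← Finset.mul_prod_Ioc_eq_prod_Icc (by omega), ← Finset.Icc_add_one_left_eq_Ioc,
    ← Finset.map_add_right_Icc, Finset.prod_map]
  rfl

lemma cfDigit_gaussMap (x : ℝ) {i : ℕ} (hi : 1 ≤ i) :
    cfDigit (gaussMap x) i = cfDigit x (i + 1) := by
  obtain ⟨m, rfl⟩ := Nat.exists_eq_add_of_le' hi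
  simp only [cfDigit, Nat.add_sub_cancel, Function.iterate_succ_apply]

lemma gaussMap_mem_Ico (x : ℝ) : gaussMap x ∈ Ico (0 : ℝ) 1 :=
  ⟨Int.fract_nonneg _, Int.fract_lt_one _⟩

lemma inv_eq_cfDigit_one_add_gaussMap {x : ℝ} (hx : 0 ≤ x) :
    x⁻¹ = cfDigit x 1 + gaussMap x := by
  rw [cfDigit, gaussMap, Nat.sub_self, Function.iterate_zero_apply,
    natCast_floor_eq_intCast_floor (inv_nonneg.2 hx), Int.floor_add_fract]

lemma lipschitzOnWith_inv_const_add {a : ℝ} (ha : 0 < a) :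
    LipschitzOnWith (a⁻¹ ^ 2).toNNReal (fun y => (a + y)⁻¹) (Ici 0) := by
  refine LipschitzOnWith.of_dist_le_mul fun u (hu : 0 ≤ u) v (hv : 0 ≤ v) => ?_
  have hau : a ≤ a + u := by linarith
  have hav : a ≤ a + v := by linarith
  have hprod : a * a ≤ (a + u) * (a + v) := mul_le_mul hau hav ha.le (by linarith)
  rw [Real.coe_toNNReal _ (by positivity), Real.dist_eq, Real.dist_eq,
    inv_sub_inv (by linarith) (by linarith), abs_div,
    abs_of_pos (show 0 < (a + u) * (a + v) by positivity),
    add_sub_add_left_eq_sub, abs_sub_comm, inv_pow, ← div_eq_inv_mul, sq]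
  exact div_le_div_of_nonneg_left (abs_nonneg _) (by positivity) hprod

lemma LipschitzOnWith.volume_image_le {K : NNReal} {f : ℝ → ℝ} {s : Set ℝ}
    (hf : LipschitzOnWith K f s) : volume (f '' s) ≤ K * volume s := by
  simpa [hausdorffMeasure_real] using hf.hausdorffMeasure_image_le zero_le_one

lemma prod_inv_sq_le_exp {ι : Type*} {s : Finset ι} {a : ι → ℕ} {c : ℝ} {ψ : ι → ℝ}
    (h : ∀ k ∈ s, exp (c * ψ k) ≤ a k) :
    ∏ k ∈ s, ((a k : ℝ)⁻¹) ^ 2 ≤ exp (-2 * c * ∑ k ∈ s, ψ k) := by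
  rw [Finset.mul_sum, Real.exp_sum]
  refine Finset.prod_le_prod (fun _ _ => by positivity) fun k hk => ?_
  calc ((a k : ℝ)⁻¹) ^ 2 ≤ (exp (c * ψ k))⁻¹ ^ 2 := by gcongr; exact h k hk
    _ = exp (-2 * c * ψ k) := by rw [← Real.exp_neg, sq, ← Real.exp_add]; ring_nf

/-- The union of the cylinders `I_{n+1}(a 1, …, a n, σ)` over all digits `σ ≥ T`. -/
def cfCylinderTail (n : ℕ) (a : ℕ → ℕ) (T : ℝ) : Set ℝ :=
  {x | x ∈ Ico (0 : ℝ) 1 ∧ (∀ i, 1 ≤ i → i ≤ n → cfDigit x i = a i) ∧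
    T ≤ (cfDigit x (n + 1) : ℝ)}

lemma cfCylinderTail_zero_subset (a : ℕ → ℕ) {T : ℝ} (hT : 0 < T) :
    cfCylinderTail 0 a T ⊆ Ioc 0 T⁻¹ := by
  rintro x ⟨⟨hx0, -⟩, -, hTx⟩
  have hTle : T ≤ x⁻¹ := hTx.trans (Nat.floor_le (inv_nonneg.2 hx0))
  have hx : 0 < x := inv_pos.1 (hT.trans_le hTle)
  exact ⟨hx, (le_inv_comm₀ hT hx).1 hTle⟩

lemma cfCylinderTail_succ_subset (n : ℕ) (a : ℕ → ℕ) (T : ℝ) :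
    cfCylinderTail (n + 1) a T ⊆
      (fun y => ((a 1 : ℝ) + y)⁻¹) '' cfCylinderTail n (fun k => a (k + 1)) T := by
  rintro x ⟨⟨hx0, -⟩, hdigits, hTx⟩
  refine ⟨gaussMap x, ⟨gaussMap_mem_Ico x, fun i hi hin => ?_, ?_⟩, ?_⟩
  · rw [cfDigit_gaussMap x hi, hdigits (i + 1) (by omega) (by omega)]
  · rwa [cfDigit_gaussMap x (by omega)]
  · rw [← hdigits 1 le_rfl (by omega)]
    beta_reduce
    rw [← inv_eq_cfDigit_one_add_gaussMap hx0, inv_inv]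

theorem volume_cfCylinderTail_le {T : ℝ} (hT : 0 < T) (n : ℕ) (a : ℕ → ℕ)
    (ha : ∀ k ∈ Finset.Icc 1 n, 0 < a k) :
    volume (cfCylinderTail n a T) ≤
      ENNReal.ofReal (T⁻¹ * ∏ k ∈ Finset.Icc 1 n, ((a k : ℝ)⁻¹) ^ 2) := by
  induction n generalizing a with
  | zero =>
    simpa using measure_mono (μ := volume) (cfCylinderTail_zero_subset a hT)
  | succ n ih =>
    have ha1 : (0 : ℝ) < a 1 := by exact_mod_cast ha 1 (by simp)
    have hLip := (lipschitzOnWith_inv_const_add ha1).mono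
      fun y (hy : y ∈ cfCylinderTail n (fun k => a (k + 1)) T) => hy.1.1
    calc volume (cfCylinderTail (n + 1) a T)
        ≤ ENNReal.ofReal ((a 1 : ℝ)⁻¹ ^ 2) *
            volume (cfCylinderTail n (fun k => a (k + 1)) T) :=
          (measure_mono (cfCylinderTail_succ_subset n a T)).trans hLip.volume_image_le
      _ ≤ ENNReal.ofReal ((a 1 : ℝ)⁻¹ ^ 2) *
            ENNReal.ofReal (T⁻¹ * ∏ k ∈ Finset.Icc 1 n, ((a (k + 1) : ℝ)⁻¹) ^ 2) := by
          gcongr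
          exact ih _ fun k hk => ha (k + 1) (by simp at hk ⊢; omega)
      _ = ENNReal.ofReal (T⁻¹ * ∏ k ∈ Finset.Icc 1 (n + 1), ((a k : ℝ)⁻¹) ^ 2) := by
          rw [← ENNReal.ofReal_mul (by positivity), Finset.prod_Icc_one_succ]
          ring_nf

theorem cfJ_measure_le_general (ε : ℝ) (ψ : ℕ → ℝ) (n : ℕ) (σ : ℕ → ℕ)
    (hσ : ∀ k, 1 ≤ k → k ≤ n →
      Real.exp ((1 - ε) * ψ k) ≤ (σ k : ℝ) ∧ (σ k : ℝ) ≤ Real.exp ((1 + ε) * ψ k)) :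
    volume (cfJ n σ ε ψ) ≤
      ENNReal.ofReal
        (Real.exp (-(1 - ε) * ψ (n + 1) - 2 * (1 - ε) * ∑ k ∈ Finset.Icc 1 n, ψ k)) := by
  set T := exp ((1 - ε) * ψ (n + 1))
  have hσ_lower : ∀ k ∈ Finset.Icc 1 n, exp ((1 - ε) * ψ k) ≤ σ k := fun k hk =>
    (hσ k (Finset.mem_Icc.1 hk).1 (Finset.mem_Icc.1 hk).2).1
  have hσ_pos : ∀ k ∈ Finset.Icc 1 n, 0 < σ k := fun k hk => by
    exact_mod_cast (exp_pos _).trans_le (hσ_lower k hk)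
  have hJ : cfJ n σ ε ψ ⊆ cfCylinderTail n σ T := fun x hx => ⟨hx.1, hx.2.1, hx.2.2.1⟩
  calc volume (cfJ n σ ε ψ) ≤ volume (cfCylinderTail n σ T) := measure_mono hJ
    _ ≤ ENNReal.ofReal (T⁻¹ * ∏ k ∈ Finset.Icc 1 n, ((σ k : ℝ)⁻¹) ^ 2) :=
      volume_cfCylinderTail_le (exp_pos _) n σ hσ_pos
    _ ≤ ENNReal.ofReal (T⁻¹ * exp (-2 * (1 - ε) * ∑ k ∈ Finset.Icc 1 n, ψ k)) := by
      gcongr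
      exact prod_inv_sq_le_exp hσ_lower
    _ = _ := by rw [← exp_neg, ← exp_add]; ring_nf

/-- Measure bound for J_n(σ_1,...,σ_n). -/
theorem cfJ_measure_le (ε : ℝ) (hε0 : 0 < ε) (hε1 : ε < 1)
    (ψ : ℕ → ℝ) (hψpos : ∀ k, 1 ≤ k → 0 < ψ k)
    (n : ℕ) (hn : 1 ≤ n) (σ : ℕ → ℕ)
    (hσ : ∀ k, 1 ≤ k → k ≤ n →
      Real.exp ((1 - ε) * ψ k) ≤ (σ k : ℝ) ∧ (σ k : ℝ) ≤ Real.exp ((1 + ε) * ψ k)) :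
    volume (cfJ n σ ε ψ) ≤
      ENNReal.ofReal
        (Real.exp (-(1 - ε) * ψ (n + 1) - 2 * (1 - ε) * ∑ k ∈ Finset.Icc 1 n, ψ k)) :=
  cfJ_measure_le_general ε ψ n σ hσ
end
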